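/- Let X be a measurable space, f̂ : X → ℝ a measurable function (a fixed regression model), and let (X₁,Y₁),…,(X_n,Y_n),(X_{n+1},Y_{n+1}) be i.i.d. random pairs in X × ℝ on a probability space (Ω, P). Define the nonconformity scores Sᵢ = |Yᵢ − f̂(Xᵢ)|. Let α ∈ (0,1) with ⌈(n+1)(1−α)⌉ ≤ n, and let q̂ denote the ⌈(n+1)(1−α)⌉-th smallest value among S₁,…,S_n. Then P( f̂(X_{n+1}) − q̂ ≤ Y_{n+1} ≤ f̂(X_{n+1}) + q̂ ) ≥ 1 − α. -/

import Mathlib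

/-!
Put all `n + 1` scores `S₀, …, Sₙ` in one vector. The test score `Sₙ` exceeds `q̂` exactly
when at least `k = ⌈(n+1)(1-α)⌉` scores are strictly below it. For any vector, at most
`n + 1 - k` coordinates have that many coordinates strictly below them (the smallest such
coordinate already has `k` others below it, none of which qualify). The law of an i.i.d.
vector is invariant under permutations of the coordinates, so each coordinate is in this
position with the same probability `p`, and summing over the coordinates gives
`(n+1) p ≤ n + 1 - k ≤ (n+1) α`.
-/

open MeasureTheory ProbabilityTheory
open scoped Classical

/-- The `k`-th smallest value (order statistic of rank `k`, with `1 ≤ k ≤ n`) of the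
finite family `f : Fin n → ℝ`: the infimum of the set of `x` such that at least `k`
of the values `f i` are `≤ x`. -/
noncomputable def kthSmallest (n : ℕ) (f : Fin n → ℝ) (k : ℕ) : ℝ :=
  sInf {x : ℝ | k ≤ (Finset.univ.filter (fun i => f i ≤ x)).card}

open Finset
open scoped ENNReal

lemma le_kthSmallest_iff {n : ℕ} (s : Fin n → ℝ) {k : ℕ} (hk : 1 ≤ k) (hkn : k ≤ n) (t : ℝ) :
    t ≤ kthSmallest n s k ↔ #{i | s i < t} < k := by
  obtain ⟨b, hb⟩ := (Set.finite_range s).bddBelow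
  obtain ⟨c, hc⟩ := (Set.finite_range s).bddAbove
  have hne : {x : ℝ | k ≤ #{i | s i ≤ x}}.Nonempty :=
    ⟨c, by simpa [filter_true_of_mem fun i _ => hc (Set.mem_range_self i)] using hkn⟩
  have hbdd : BddBelow {x : ℝ | k ≤ #{i | s i ≤ x}} := by
    refine ⟨b, fun x hx => ?_⟩
    obtain ⟨i, hi⟩ := card_pos.mp (hk.trans hx)
    exact (hb (Set.mem_range_self i)).trans (mem_filter.mp hi).2
  rw [kthSmallest, le_csInf_iff hbdd hne, ← not_iff_not]
  push Not
  constructor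
  · rintro ⟨x, hx, hxt⟩
    exact hx.trans (card_le_card fun i hi => by
      simp only [mem_filter, mem_univ, true_and] at hi ⊢; exact hi.trans_lt hxt)
  · intro hkt
    have hF : (filter (fun i => s i < t) univ).Nonempty := card_pos.mp (hk.trans hkt)
    refine ⟨sup' _ hF s, hkt.trans (card_le_card fun i hi => ?_),
      (sup'_lt_iff hF).mpr fun i hi => ?_⟩
    · exact mem_filter.mpr ⟨mem_univ i, le_sup' s hi⟩
    · exact (mem_filter.mp hi).2

section StrictRank

variable {ι α : Type*} [Fintype ι] [LinearOrder α]

def strictRank (x : ι → α) (j : ι) : ℕ := #{i | x i < x j}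

lemma card_le_strictRank_le (x : ι → α) (k : ℕ) :
    #{j | k ≤ strictRank x j} ≤ Fintype.card ι - k := by
  set T : Finset ι := {j | k ≤ strictRank x j}
  obtain h | hT := T.eq_empty_or_nonempty
  · simp [h]
  obtain ⟨j₀, hj₀, hmin⟩ := T.exists_min_image x hT
  have hbelow : ({i | x i < x j₀} : Finset ι) ⊆ Tᶜ := fun i hi =>
    mem_compl.mpr fun hiT => (hmin i hiT).not_gt (mem_filter.mp hi).2
  have := (mem_filter.mp hj₀).2.trans (card_le_card hbelow)
  rw [card_compl] at this
  have := T.card_le_univ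
  omega

lemma strictRank_comp_perm (x : ι → α) (σ : Equiv.Perm ι) (j : ι) :
    strictRank (x ∘ σ) j = strictRank x (σ j) := by
  simp only [strictRank, card_filter, Function.comp_apply]
  exact Equiv.sum_comp σ (fun i => if x i < x (σ j) then 1 else 0)

lemma strictRank_last {n : ℕ} (x : Fin (n + 1) → α) :
    strictRank x (Fin.last n) = #{i : Fin n | x i.castSucc < x (Fin.last n)} := by
  rw [strictRank, card_filter, card_filter, Fin.sum_univ_castSucc]
  simp

end StrictRank

lemma measurePreserving_comp_perm_pi {ι α : Type*} [Fintype ι] [MeasurableSpace α]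
    (ν : Measure α) [SigmaFinite ν] (σ : Equiv.Perm ι) :
    MeasurePreserving (· ∘ σ) (Measure.pi fun _ : ι => ν) (Measure.pi fun _ : ι => ν) := by
  convert measurePreserving_piCongrLeft (fun _ : ι => ν) σ.symm using 1
  ext x i
  simpa [MeasurableEquiv.coe_piCongrLeft] using
    (Equiv.piCongrLeft_apply_apply (fun _ => α) σ.symm x (σ i)).symm

lemma ProbabilityTheory.iIndepFun.measurePreserving_comp_perm {Ω ι β : Type*}
    [MeasurableSpace Ω] [Fintype ι] [MeasurableSpace β] {P : Measure Ω} {S : ι → Ω → β}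
    (hS : ∀ i, AEMeasurable (S i) P) (hind : iIndepFun S P) {ν : Measure β} [SigmaFinite ν]
    (hν : ∀ i, P.map (S i) = ν) (σ : Equiv.Perm ι) :
    MeasurePreserving (· ∘ σ) (P.map fun ω i => S i ω) (P.map fun ω i => S i ω) := by
  rw [hind.map_fun_eq_pi_map hS, funext hν]
  exact measurePreserving_comp_perm_pi ν σ

section Exchangeable

variable {ι α : Type*} [Fintype ι] [LinearOrder α] [MeasurableSpace α] [TopologicalSpace α]
  [OrderClosedTopology α] [OpensMeasurableSpace α] [SecondCountableTopology α]
  {μ : Measure (ι → α)}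

lemma measurable_strictRank (j : ι) : Measurable fun x : ι → α => strictRank x j := by
  simp only [strictRank, card_filter]
  exact Finset.measurable_sum _ fun i _ => Measurable.ite
    (measurableSet_lt (measurable_pi_apply i) (measurable_pi_apply j))
    measurable_const measurable_const

lemma measurableSet_le_strictRank (k : ℕ) (j : ι) :
    MeasurableSet {x : ι → α | k ≤ strictRank x j} :=
  measurableSet_le measurable_const (measurable_strictRank j)

lemma measure_le_strictRank_eq (hμ : ∀ σ : Equiv.Perm ι, MeasurePreserving (· ∘ σ) μ μ)
    (k : ℕ) (i j : ι) : μ {x | k ≤ strictRank x i} = μ {x | k ≤ strictRank x j} := by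
  have hpre : {x : ι → α | k ≤ strictRank x i} =
      (· ∘ Equiv.swap i j) ⁻¹' {x | k ≤ strictRank x j} := by
    ext x
    simp [strictRank_comp_perm]
  rw [hpre, (hμ _).measure_preimage (measurableSet_le_strictRank k j).nullMeasurableSet]

lemma card_mul_measure_le_strictRank_le [IsProbabilityMeasure μ]
    (hμ : ∀ σ : Equiv.Perm ι, MeasurePreserving (· ∘ σ) μ μ) (k : ℕ) (j : ι) :
    Fintype.card ι * μ {x | k ≤ strictRank x j} ≤ (Fintype.card ι - k : ℕ) := by
  have hB := measurableSet_le_strictRank (ι := ι) (α := α) k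
  calc (Fintype.card ι : ℝ≥0∞) * μ {x | k ≤ strictRank x j}
      = ∑ i, μ {x | k ≤ strictRank x i} := by simp [measure_le_strictRank_eq hμ k _ j]
    _ = ∫⁻ x, ∑ i, {x | k ≤ strictRank x i}.indicator 1 x ∂μ := by
        rw [lintegral_finsetSum _ fun i _ => measurable_one.indicator (hB i)]
        simp [lintegral_indicator_one (hB _)]
    _ = ∫⁻ x, (#{i | k ≤ strictRank x i} : ℝ≥0∞) ∂μ := by
        congr 1
        ext x
        simp [Set.indicator_apply]
    _ ≤ ∫⁻ _, ((Fintype.card ι - k : ℕ) : ℝ≥0∞) ∂μ :=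
        lintegral_mono fun x => Nat.cast_le.mpr (card_le_strictRank_le x k)
    _ = (Fintype.card ι - k : ℕ) := by simp

lemma measure_le_strictRank_le_ofReal [IsProbabilityMeasure μ]
    (hμ : ∀ σ : Equiv.Perm ι, MeasurePreserving (· ∘ σ) μ μ) {k : ℕ} {a : ℝ} (ha : 0 ≤ a)
    (hk : Fintype.card ι * (1 - a) ≤ k) (j : ι) :
    μ {x | k ≤ strictRank x j} ≤ ENNReal.ofReal a := by
  set m := Fintype.card ι
  have : Nonempty ι := ⟨j⟩
  have hm : (m : ℝ≥0∞) ≠ 0 := by simp [m]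
  have hmk : ((m - k : ℕ) : ℝ≥0∞) ≤ m * ENNReal.ofReal a := by
    rw [ENNReal.natCast_sub, tsub_le_iff_right, ← ENNReal.ofReal_natCast m,
      ← ENNReal.ofReal_natCast k, ← ENNReal.ofReal_mul (by positivity),
      ← ENNReal.ofReal_add (by positivity) (by positivity)]
    exact ENNReal.ofReal_le_ofReal (by linarith)
  exact (ENNReal.mul_le_mul_iff_right hm (ENNReal.natCast_ne_top m)).mp
    ((card_mul_measure_le_strictRank_le hμ k j).trans hmk)

end Exchangeable

theorem stmt3_general {X : Type*} [MeasurableSpace X]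
    {Ω : Type*} [MeasurableSpace Ω] (P : Measure Ω) [IsProbabilityMeasure P]
    (fhat : X → ℝ) (hf : Measurable fhat)
    (n : ℕ)
    (W : Fin (n + 1) → Ω → X × ℝ) (hWm : ∀ i, Measurable (W i))
    (hWi : iIndepFun W P)
    (hWid : ∀ i j, IdentDistrib (W i) (W j) P P)
    (α : ℝ) (hα : α ∈ Set.Ioo (0:ℝ) 1)
    (hk : ⌈((n : ℝ) + 1) * (1 - α)⌉₊ ≤ n) :
    ENNReal.ofReal (1 - α) ≤
      P {ω |
        fhat (W (Fin.last n) ω).1 -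
            kthSmallest n (fun i : Fin n => |(W i.castSucc ω).2 - fhat (W i.castSucc ω).1|)
              ⌈((n : ℝ) + 1) * (1 - α)⌉₊
          ≤ (W (Fin.last n) ω).2 ∧
        (W (Fin.last n) ω).2 ≤
          fhat (W (Fin.last n) ω).1 +
            kthSmallest n (fun i : Fin n => |(W i.castSucc ω).2 - fhat (W i.castSucc ω).1|)
              ⌈((n : ℝ) + 1) * (1 - α)⌉₊} := by
  obtain ⟨hα0, hα1⟩ := hα
  set k := ⌈((n : ℝ) + 1) * (1 - α)⌉₊
  have hk1 : 1 ≤ k := Nat.ceil_pos.mpr (mul_pos (by positivity) (by linarith))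
  set score : X × ℝ → ℝ := fun p => |p.2 - fhat p.1|
  have hscore : Measurable score := (measurable_snd.sub (hf.comp measurable_fst)).abs
  have hscoreW : ∀ i, Measurable (score ∘ W i) := fun i => hscore.comp (hWm i)
  set S : Ω → Fin (n + 1) → ℝ := fun ω i => score (W i ω)
  have hS : Measurable S := measurable_pi_lambda _ hscoreW
  have := Measure.isProbabilityMeasure_map (μ := P) hS.aemeasurable
  have := Measure.isProbabilityMeasure_map (μ := P) (hscoreW (Fin.last n)).aemeasurable
  have hexch : ∀ σ : Equiv.Perm (Fin (n + 1)), MeasurePreserving (· ∘ σ) (P.map S) (P.map S) :=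
    (hWi.comp (fun _ => score) fun _ => hscore).measurePreserving_comp_perm
      (fun i => (hscoreW i).aemeasurable) fun i => ((hWid i (Fin.last n)).comp hscore).map_eq
  have hmiss := measure_le_strictRank_le_ofReal hexch hα0.le (by simpa using Nat.le_ceil _)
    (k := k) (Fin.last n)
  suffices hE : ENNReal.ofReal (1 - α) ≤ P (S ⁻¹' {x | k ≤ strictRank x (Fin.last n)})ᶜ by
    refine hE.trans_eq (congrArg P (Set.ext fun ω => ?_))
    rw [Set.mem_ofPred_eq, ← Set.mem_Icc, ← Set.mem_Icc_iff_abs_le, abs_sub_comm,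
      le_kthSmallest_iff _ hk1 hk, Set.mem_compl_iff, Set.mem_preimage, Set.mem_ofPred_eq,
      strictRank_last, not_le]
  rw [prob_compl_eq_one_sub (hS (measurableSet_le_strictRank k _)),
    ← Measure.map_apply hS (measurableSet_le_strictRank k _), ENNReal.ofReal_sub _ hα0.le,
    ENNReal.ofReal_one]
  exact tsub_le_tsub_left hmiss 1

/-- Split conformal regression interval guarantee: for a fixed regression model `f̂` and
i.i.d. pairs `(X₀,Y₀), …, (Xₙ,Yₙ)`, letting `q̂` be the `⌈(n+1)(1-α)⌉`-th smallest of the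
calibration scores `|Yᵢ - f̂(Xᵢ)|` (for `i < n`), the interval
`[f̂(Xₙ) - q̂, f̂(Xₙ) + q̂]` covers `Yₙ` with probability at least `1 - α`. -/
theorem stmt3 {X : Type*} [MeasurableSpace X]
    {Ω : Type*} [MeasurableSpace Ω] (P : Measure Ω) [IsProbabilityMeasure P]
    (fhat : X → ℝ) (hf : Measurable fhat)
    (n : ℕ) (hn : 0 < n)
    (W : Fin (n + 1) → Ω → X × ℝ) (hWm : ∀ i, Measurable (W i))
    (hWi : iIndepFun W P)
    (hWid : ∀ i j, IdentDistrib (W i) (W j) P P)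
    (α : ℝ) (hα : α ∈ Set.Ioo (0:ℝ) 1)
    (hk : ⌈((n : ℝ) + 1) * (1 - α)⌉₊ ≤ n) :
    ENNReal.ofReal (1 - α) ≤
      P {ω |
        fhat (W (Fin.last n) ω).1 -
            kthSmallest n (fun i : Fin n => |(W i.castSucc ω).2 - fhat (W i.castSucc ω).1|)
              ⌈((n : ℝ) + 1) * (1 - α)⌉₊
          ≤ (W (Fin.last n) ω).2 ∧
        (W (Fin.last n) ω).2 ≤
          fhat (W (Fin.last n) ω).1 +
            kthSmallest n (fun i : Fin n => |(W i.castSucc ω).2 - fhat (W i.castSucc ω).1|)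
              ⌈((n : ℝ) + 1) * (1 - α)⌉₊} :=
  stmt3_general P fhat hf n W hWm hWi hWid α hα hk
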